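/- arXiv:2001.02269 — 6 statements merged into one kernel-verified Lean document; each statement's English description precedes it below -/
import Mathlib

section
/- For all positive parameters α, β, σ, δ, μ, γ, the points O₁ = (0,0,0) and O₂,₃ = (±√(γμ(σ+δ)/(αβσ)), ±√(γμσ(σ+δ)/(αβδ²)), μ(σ+δ)/(βδ)) are precisely the equilibria of the Shapovalov system, i.e., the right-hand side of the system vanishes exactly at these three points. -/
/-- The equilibria of the Shapovalov system are exactly the three points
O₁, O₂, O₃. -/
theorem shapovalov_equilibria
    (α β σ δ μ γ : ℝ) (hα : 0 < α) (hβ : 0 < β) (hσ : 0 < σ)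
    (hδ : 0 < δ) (hμ : 0 < μ) (hγ : 0 < γ) (x y z : ℝ) :
    (-σ * x + δ * y = 0 ∧ μ * x + μ * y - β * x * z = 0 ∧ -γ * z + α * x * y = 0) ↔
    ((x, y, z) = ((0 : ℝ), (0 : ℝ), (0 : ℝ)) ∨
     (x, y, z) = (Real.sqrt (γ * μ * (σ + δ) / (α * β * σ)),
                  Real.sqrt (γ * μ * σ * (σ + δ) / (α * β * δ ^ 2)),
                  μ * (σ + δ) / (β * δ)) ∨
     (x, y, z) = (-Real.sqrt (γ * μ * (σ + δ) / (α * β * σ)),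
                  -Real.sqrt (γ * μ * σ * (σ + δ) / (α * β * δ ^ 2)),
                  μ * (σ + δ) / (β * δ))) := by
  have hδ' := hδ.ne'
  have hs2 : Real.sqrt (γ * μ * (σ + δ) / (α * β * σ)) ^ 2
      = γ * μ * (σ + δ) / (α * β * σ) := Real.sq_sqrt (by positivity)
  have hsnn : 0 ≤ Real.sqrt (γ * μ * (σ + δ) / (α * β * σ)) := Real.sqrt_nonneg _
  set s := Real.sqrt (γ * μ * (σ + δ) / (α * β * σ)) with hsdef
  have ht : Real.sqrt (γ * μ * σ * (σ + δ) / (α * β * δ ^ 2)) = σ / δ * s := by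
    rw [hsdef, ← Real.sqrt_sq (le_of_lt (div_pos hσ hδ)),
      ← Real.sqrt_mul (by positivity)]
    congr 1
    field_simp
  rw [ht]
  simp only [Prod.mk.injEq]
  constructor
  · rintro ⟨h1, h2, h3⟩
    by_cases hx : x = 0
    · left
      subst hx
      have hy : y = 0 := by
        have : δ * y = 0 := by linarith
        exact (mul_eq_zero.mp this).resolve_left hδ.ne'
      subst hy
      have hz : z = 0 := by
        have : γ * z = 0 := by nlinarith
        exact (mul_eq_zero.mp this).resolve_left hγ.ne'
      exact ⟨rfl, rfl, hz⟩
    · have hy : y = σ / δ * x := by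
        field_simp
        linarith
      have hz : z = μ * (σ + δ) / (β * δ) := by
        rw [hy] at h2
        field_simp at h2 ⊢
        have h2' : x * (μ * δ + μ * σ - δ * β * z) = 0 := by linear_combination h2
        rcases mul_eq_zero.mp h2' with h | h
        · exact absurd h hx
        · linarith
      have hx2 : x ^ 2 = s ^ 2 := by
        rw [hs2]
        rw [hy, hz] at h3
        field_simp at h3 ⊢
        nlinarith [h3]
      have : (x - s) * (x + s) = 0 := by nlinarith [hx2]
      rcases mul_eq_zero.mp this with h | h
      · right; left
        have hxs : x = s := by linarith
        exact ⟨hxs, by rw [hy, hxs], hz⟩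
      · right; right
        have hxs : x = -s := by linarith
        exact ⟨hxs, by rw [hy, hxs]; ring, hz⟩
  · rintro (⟨hx, hy, hz⟩ | ⟨hx, hy, hz⟩ | ⟨hx, hy, hz⟩) <;> subst hx <;> subst hy <;> subst hz
    · norm_num
    all_goals {
      have hs2' : α * β * σ * s ^ 2 = γ * μ * (σ + δ) := by
        rw [hs2]; field_simp
      refine ⟨by field_simp; try ring, by field_simp; try ring, ?_⟩
      field_simp
      nlinarith [hs2'] }
end

section
/- Let c, b, r > 0 with b < 2c. For any solution (x(t), y(t), z(t)) of the Lorenz-like system, liminf as t → +∞ of [z(t) - x(t)²/(2c)] ≥ 0. -/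
open Filter

/-- For any solution of the Lorenz-like system (b < 2c),
liminf_{t→∞} [z(t) - x(t)²/(2c)] ≥ 0. -/
theorem lorenz_like_liminf_nonneg
    (c b r : ℝ) (hc : 0 < c) (hb : 0 < b) (hr : 0 < r) (hbc : b < 2 * c)
    (x y z : ℝ → ℝ)
    (hx : ∀ t, HasDerivAt x (-c * x t + c * y t) t)
    (hy : ∀ t, HasDerivAt y (r * x t + y t - x t * z t) t)
    (hz : ∀ t, HasDerivAt z (-b * z t + x t * y t) t) :
    0 ≤ Filter.liminf (fun t => z t - (x t) ^ 2 / (2 * c)) Filter.atTop := by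
  set u : ℝ → ℝ := fun t => z t - (x t) ^ 2 / (2 * c) with hudef
  have hc2 : (0:ℝ) < 2 * c := by positivity
  have hu' : ∀ t, HasDerivAt u (-b * z t + (x t) ^ 2) t := by
    intro t
    have h1 : HasDerivAt (fun s => (x s) ^ 2 / (2 * c))
        ((2 * x t ^ 1 * (-c * x t + c * y t)) / (2 * c)) t := by
      simpa using ((hx t).pow 2).div_const (2 * c)
    have h2 := (hz t).sub h1
    refine h2.congr_deriv ?_
    field_simp
    ring
  set v : ℝ → ℝ := fun t => Real.exp (b * t) * u t with hvdef
  have hv' : ∀ t, HasDerivAt v (Real.exp (b * t) * ((x t) ^ 2 * (1 - b / (2 * c)))) t := by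
    intro t
    have he : HasDerivAt (fun s : ℝ => Real.exp (b * s)) (Real.exp (b * t) * b) t := by
      have := (Real.hasDerivAt_exp (b * t)).comp t ((hasDerivAt_id t).const_mul b)
      simp only [mul_one] at this
      exact this
    have h3 := he.mul (hu' t)
    refine h3.congr_deriv ?_
    simp only [hudef]
    field_simp
    ring
  have hmono : Monotone v := by
    apply monotone_of_deriv_nonneg
    · exact fun t => (hv' t).differentiableAt
    · intro t
      rw [(hv' t).deriv]
      have h4 : 0 ≤ 1 - b / (2 * c) := by
        rw [sub_nonneg, div_le_one hc2]; linarith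
      positivity
  have key : ∀ t ≥ (0:ℝ), u 0 * Real.exp (-(b * t)) ≤ u t := by
    intro t ht
    have h1 : v 0 ≤ v t := hmono ht
    simp only [hvdef, mul_zero, Real.exp_zero, one_mul] at h1
    rw [Real.exp_neg, mul_inv_le_iff₀ (Real.exp_pos _)]
    linarith [h1, mul_comm (Real.exp (b * t)) (u t)]
  have hg : Tendsto (fun t => u 0 * Real.exp (-(b * t))) atTop (nhds 0) := by
    have h5 : Tendsto (fun t : ℝ => -(b * t)) atTop atBot := by
      have := (tendsto_const_mul_atTop_of_pos hb).mpr (tendsto_id (α := ℝ))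
      exact tendsto_neg_atBot_iff.mpr this
    have h6 : Tendsto (fun t : ℝ => Real.exp (-(b * t))) atTop (nhds 0) :=
      Real.tendsto_exp_atBot.comp h5
    simpa using tendsto_const_nhds.mul h6
  by_cases hS : BddAbove {a : ℝ | ∀ᶠ t in atTop, a ≤ u t}
  · have hcob : IsCoboundedUnder (· ≥ ·) atTop u := by
      obtain ⟨B, hB⟩ := hS
      exact ⟨B, fun a ha => hB (eventually_map.mp ha)⟩
    calc (0:ℝ) = liminf (fun t => u 0 * Real.exp (-(b * t))) atTop := hg.liminf_eq.symm
      _ ≤ liminf u atTop := by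
          apply liminf_le_liminf _ hg.isBoundedUnder_ge hcob
          filter_upwards [eventually_ge_atTop (0:ℝ)] with t ht using key t ht
  · rw [liminf_eq, Real.sSup_of_not_bddAbove hS]
end

section
/- Let c, b, r > 0 with b < 2c. The set Ω₁ = {(x,y,z) ∈ ℝ³ : z ≥ x²/(2c)} is positively invariant for the Lorenz-like system: if a solution starts in Ω₁, it remains in Ω₁ for all t ≥ 0. -/
/-- The set Ω₁ = {z ≥ x²/(2c)} is positively invariant for the Lorenz-like
system when b < 2c. -/
theorem lorenz_like_parabolic_cylinder_invariant
    (c b r : ℝ) (hc : 0 < c) (hb : 0 < b) (hr : 0 < r) (hbc : b < 2 * c)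
    (x y z : ℝ → ℝ)
    (hx : ∀ t, HasDerivAt x (-c * x t + c * y t) t)
    (hy : ∀ t, HasDerivAt y (r * x t + y t - x t * z t) t)
    (hz : ∀ t, HasDerivAt z (-b * z t + x t * y t) t)
    (h0 : (x 0) ^ 2 / (2 * c) ≤ z 0) :
    ∀ t ≥ 0, (x t) ^ 2 / (2 * c) ≤ z t := by
  intro t ht
  set v : ℝ → ℝ := fun s => Real.exp (b * s) * (z s - (x s) ^ 2 / (2 * c)) with hv
  have hderiv : ∀ s, HasDerivAt v
      (Real.exp (b * s) * b * (z s - (x s) ^ 2 / (2 * c)) +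
        Real.exp (b * s) *
          ((-b * z s + x s * y s) -
            (2 * x s * (-c * x s + c * y s)) / (2 * c))) s := by
    intro s
    have he : HasDerivAt (fun u : ℝ => Real.exp (b * u)) (Real.exp (b * s) * b) s := by
      simpa using ((hasDerivAt_id s).const_mul b).exp
    have hxsq : HasDerivAt (fun u => (x u) ^ 2 / (2 * c))
        ((2 * x s * (-c * x s + c * y s)) / (2 * c)) s := by
      have := ((hx s).pow 2).div_const (2 * c)
      simpa [mul_comm, mul_assoc, mul_left_comm] using this
    exact he.mul ((hz s).sub hxsq)
  have hd' : ∀ s, deriv v s =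
      Real.exp (b * s) * (x s) ^ 2 * ((2 * c - b) / (2 * c)) := by
    intro s
    rw [(hderiv s).deriv]
    field_simp
    ring
  have hmono : Monotone v := by
    apply monotone_of_deriv_nonneg
    · exact fun s => (hderiv s).differentiableAt
    · intro s
      rw [hd' s]
      have h1 : 0 ≤ (2 * c - b) / (2 * c) := by
        apply div_nonneg <;> linarith
      have h2 : 0 ≤ Real.exp (b * s) * (x s) ^ 2 :=
        mul_nonneg (Real.exp_pos _).le (sq_nonneg _)
      exact mul_nonneg h2 h1
  have hv0 : 0 ≤ v 0 := by
    simp only [hv, mul_zero, Real.exp_zero, one_mul]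
    linarith
  have hvt : 0 ≤ v t := le_trans hv0 (hmono ht)
  have hexp : 0 < Real.exp (b * t) := Real.exp_pos _
  simp only [hv] at hvt
  have := (mul_nonneg_iff_of_pos_left hexp).mp hvt
  linarith
end

section
/- Suppose c, b, r > 0 with b > 2 and b < 2c, and choose B ∈ (1/c, b/(2c)) and A > B². Then there exist λ > 0 and K > 0 such that on the set {z ≥ x²/(2c)}, the derivative of V(x,y,z) = (1/2)[Ax² - 2Bxy + y² + (z - (r + (A+B)c - B))²] along solutions of the Lorenz-like system satisfies V̇ ≤ -λ(x² + y² + z²) + K. -/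
/-- On the set {z ≥ x²/(2c)} the derivative of V along the Lorenz-like vector
field satisfies V̇ ≤ -λ(x² + y² + z²) + K for some λ, K > 0, provided
2 < b < 2c, B ∈ (1/c, b/(2c)) and A > B². Here V̇ is the pointwise derivative
∇V·f given by the identity
V̇ = -(Ac+Br)x² - (Bc-1)y² - (b-2Bc)z² + (r+(A+B)c-B)bz - 2cBz(z - x²/(2c)). -/
theorem lyapunov_V_dissipativity_estimate
    (c b r A B : ℝ) (hc : 0 < c) (hb : 0 < b) (hr : 0 < r)
    (hb2 : 2 < b) (hbc : b < 2 * c)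
    (hB1 : 1 / c < B) (hB2 : B < b / (2 * c)) (hA : B ^ 2 < A) :
    ∃ lam K : ℝ, 0 < lam ∧ 0 < K ∧
      ∀ x y z : ℝ, x ^ 2 / (2 * c) ≤ z →
        -(A * c + B * r) * x ^ 2 - (B * c - 1) * y ^ 2
          - (b - 2 * B * c) * z ^ 2 + (r + (A + B) * c - B) * b * z
          - 2 * c * B * z * (z - x ^ 2 / (2 * c))
        ≤ -lam * (x ^ 2 + y ^ 2 + z ^ 2) + K := by
  have hB0 : 0 < B := lt_trans (by positivity) hB1
  have hA0 : 0 < A := lt_of_le_of_lt (by positivity) hA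
  have hBc : 1 < B * c := by
    have := (div_lt_iff₀ hc).mp hB1
    linarith
  have hε : 0 < (b - 2 * B * c) / 2 := by
    have := (lt_div_iff₀ (by positivity)).mp hB2
    nlinarith
  set ε := (b - 2 * B * c) / 2 with hεdef
  set D := r + (A + B) * c - B with hDdef
  have hc1 : 1 < c := by nlinarith
  have hD : 0 < D := by
    have : 0 < A * c + B * (c - 1) := by nlinarith
    simp only [hDdef]; nlinarith
  refine ⟨min (min (A * c + B * r) (B * c - 1)) ε,
    D ^ 2 * b ^ 2 / (4 * ε) + 1, ?_, by positivity, ?_⟩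
  · apply lt_min (lt_min (by positivity) (by linarith)) hε
  · intro x y z hz
    have hz0 : 0 ≤ z := le_trans (by positivity) hz
    have key : D * b * z - ε * z ^ 2 ≤ D ^ 2 * b ^ 2 / (4 * ε) := by
      rw [le_div_iff₀ (by positivity)]
      nlinarith [sq_nonneg (D * b - 2 * ε * z)]
    have h1 : min (min (A * c + B * r) (B * c - 1)) ε ≤ A * c + B * r :=
      le_trans (min_le_left _ _) (min_le_left _ _)
    have h2 : min (min (A * c + B * r) (B * c - 1)) ε ≤ B * c - 1 :=
      le_trans (min_le_left _ _) (min_le_right _ _)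
    have h3 : min (min (A * c + B * r) (B * c - 1)) ε ≤ ε := min_le_right _ _
    have hcross : 0 ≤ 2 * c * B * z * (z - x ^ 2 / (2 * c)) := by
      have : 0 ≤ z - x ^ 2 / (2 * c) := by linarith
      positivity
    nlinarith [sq_nonneg x, sq_nonneg y, sq_nonneg z,
      mul_le_mul_of_nonneg_right h1 (sq_nonneg x),
      mul_le_mul_of_nonneg_right h2 (sq_nonneg y),
      mul_le_mul_of_nonneg_right h3 (sq_nonneg z)]
end

section
/- If γ > 2μ and γ < 2σ (with all parameters α,β,σ,δ,μ,γ positive), then the Lorenz-like system obtained from the Shapovalov model (with c = σ/μ, r = δ/σ, b = γ/μ) satisfies b > 2 and b < 2c; consequently the system is dissipative and possesses a compact ellipsoidal absorbing set {V ≤ η} into which all solutions eventually enter, where V(x,y,z) = (1/2)[Ax² - 2Bxy + y² + (z - (r + (A+B)c - B))²] for suitable A > B² and B ∈ (1/c, b/(2c)). -/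
set_option maxHeartbeats 1000000


lemma decay_bound (f f' : ℝ → ℝ) (ε C T₀ : ℝ) (hε : 0 < ε)
    (hd : ∀ t, HasDerivAt f (f' t) t)
    (hb : ∀ t ≥ T₀, f' t ≤ -ε * f t + C) :
    ∃ T : ℝ, ∀ t ≥ T, f t ≤ C / ε + 1 := by
  set g : ℝ → ℝ := fun t => (f t - C / ε) * Real.exp (ε * t) with hgdef
  have hg : ∀ t, HasDerivAt g ((f' t + ε * f t - C) * Real.exp (ε * t)) t := by
    intro t
    have h1 : HasDerivAt (fun s => f s - C / ε) (f' t) t := (hd t).sub_const _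
    have h2 : HasDerivAt (fun s => Real.exp (ε * s)) (Real.exp (ε * t) * (ε * 1)) t :=
      ((hasDerivAt_id t).const_mul ε).exp
    have h3 := h1.mul h2
    have key : (f' t + ε * f t - C) * Real.exp (ε * t)
        = f' t * Real.exp (ε * t) + (f t - C / ε) * (Real.exp (ε * t) * (ε * 1)) := by
      field_simp
      ring
    rw [key]
    exact h3
  have anti : AntitoneOn g (Set.Ici T₀) := by
    refine antitoneOn_of_deriv_nonpos (convex_Ici T₀)
      (fun t _ => (hg t).continuousAt.continuousWithinAt)
      (fun t _ => (hg t).differentiableAt.differentiableWithinAt) ?_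
    intro t ht
    rw [interior_Ici] at ht
    rw [(hg t).deriv]
    have h4 := hb t (le_of_lt ht)
    have := Real.exp_pos (ε * t)
    nlinarith
  have main : ∀ t ≥ T₀, f t ≤ C / ε + (f T₀ - C / ε) * Real.exp (-ε * (t - T₀)) := by
    intro t ht
    have h5 : g t ≤ g T₀ := anti Set.self_mem_Ici ht ht
    have h6 : Real.exp (-ε * (t - T₀)) = Real.exp (ε * T₀) / Real.exp (ε * t) := by
      rw [← Real.exp_sub]; ring_nf
    rw [h6]
    have hept := Real.exp_pos (ε * t)
    rw [hgdef] at h5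
    simp only at h5
    calc f t = (f t - C/ε) * Real.exp (ε * t) / Real.exp (ε * t) + C/ε := by
          field_simp; ring
      _ ≤ (f T₀ - C/ε) * Real.exp (ε * T₀) / Real.exp (ε * t) + C/ε := by
          gcongr
      _ = C / ε + (f T₀ - C / ε) * (Real.exp (ε * T₀) / Real.exp (ε * t)) := by ring
  set M : ℝ := max (f T₀ - C / ε) 1 with hM
  have hM1 : (1:ℝ) ≤ M := le_max_right _ _
  have hMpos : 0 < M := lt_of_lt_of_le one_pos hM1
  refine ⟨T₀ + Real.log M / ε, fun t ht => ?_⟩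
  have hlogM : 0 ≤ Real.log M := Real.log_nonneg hM1
  have htT₀ : T₀ ≤ t := by
    have : 0 ≤ Real.log M / ε := div_nonneg hlogM hε.le
    linarith
  have h7 := main t htT₀
  have h8 : (f T₀ - C / ε) * Real.exp (-ε * (t - T₀)) ≤ 1 := by
    rcases le_or_gt (f T₀ - C / ε) 0 with h | h
    · have := Real.exp_pos (-ε * (t - T₀))
      nlinarith
    · have ha : f T₀ - C / ε ≤ M := le_max_left _ _
      have hexp : Real.exp (-ε * (t - T₀)) ≤ Real.exp (- Real.log M) := by
        apply Real.exp_le_exp.2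
        have : Real.log M ≤ ε * (t - T₀) := by
          rw [← div_le_iff₀' hε] ; linarith
        linarith
      rw [Real.exp_neg, Real.exp_log hMpos] at hexp
      calc (f T₀ - C / ε) * Real.exp (-ε * (t - T₀)) ≤ M * M⁻¹ := by
            apply mul_le_mul ha hexp (Real.exp_pos _).le hMpos.le
        _ = 1 := mul_inv_cancel₀ hMpos.ne'
  linarith


lemma stepA (c r b A B d x y z : ℝ) (hc1 : 1 < c) (hr0 : 0 < r) (hb2 : 2 < b)
    (hB : B = (b+2)/(4*c)) (hA : A = B^2+1) (hd : d = r + (A+B)*c - B)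
    (hx2 : x^2 ≤ 2*c*z + 2*c) :
    -(A*c+B*r)*x^2 - (B*c-1)*y^2 + B*x^2*z - b*z^2 + b*d*z
      ≤ -(A*c+B*r)*x^2 - ((b-2)/4)*y^2 - ((b-2)/4)*z^2 + (b*d+(b+2)/2)^2/(b-2) := by
  have hc0 : (0:ℝ) < c := by linarith
  have hBpos : 0 < B := by rw [hB]; positivity
  have hApos : 0 < A := by rw [hA]; positivity
  have hdpos : 0 < d := by
    rw [hd]; nlinarith [mul_pos hApos hc0, mul_pos hBpos (show (0:ℝ) < c - 1 by linarith)]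
  have hBc : B * c = (b+2)/4 := by rw [hB]; field_simp
  have hy2 : (B*c-1)*y^2 = ((b-2)/4)*y^2 := by rw [hBc]; ring
  have hC0 : (0:ℝ) ≤ (b*d+(b+2)/2)^2/(b-2) := by
    apply div_nonneg (sq_nonneg _); linarith
  rcases le_or_gt 0 z with hz | hz
  · have hbb : B*x^2*z ≤ ((b+2)/2)*z^2 + ((b+2)/2)*z := by
      have h1 : 0 ≤ (2*c*z + 2*c - x^2) * (B*z) :=
        mul_nonneg (by linarith) (mul_nonneg hBpos.le hz)
      nlinarith [hBc]
    have hKz : (b*d+(b+2)/2)*z - ((b-2)/4)*z^2 ≤ (b*d+(b+2)/2)^2/(b-2) := by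
      have hmul : (b*d+(b+2)/2)^2/(b-2) * (b-2) = (b*d+(b+2)/2)^2 :=
        div_mul_cancel₀ _ (by linarith)
      nlinarith [sq_nonneg ((b-2)*z - 2*(b*d+(b+2)/2)), hmul]
    linarith [hbb, hKz, hy2]
  · have h1 : B*x^2*z ≤ 0 := mul_nonpos_of_nonneg_of_nonpos (by positivity) hz.le
    have h2 : b*d*z ≤ 0 := mul_nonpos_of_nonneg_of_nonpos (by positivity) hz.le
    have h3 : -(b*z^2) ≤ -(((b-2)/4)*z^2) := by nlinarith [sq_nonneg z]
    linarith [hy2]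

lemma stepB (c r b A B d ε x y z : ℝ) (hr0 : 0 < r) (hb2 : 2 < b)
    (hBpos : 0 < B) (hApos : 0 < A) (hεpos : 0 < ε)
    (hε1 : ε * ((A+B+2)/2) ≤ A*c+B*r) (hε2 : ε * ((A+B+2)/2) ≤ (b-2)/4) :
    ε * ((1/2) * (A*x^2 - 2*B*(x*y) + y^2 + (z-d)^2))
      ≤ (A*c+B*r)*x^2 + ((b-2)/4)*y^2 + ((b-2)/4)*z^2 + ε*d^2 := by
  have hq1 : -(2*B*(x*y)) ≤ B*x^2 + B*y^2 := by nlinarith [sq_nonneg (x+y), hBpos]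
  have hq2 : (z-d)^2 ≤ 2*z^2 + 2*d^2 := by nlinarith [sq_nonneg (z+d)]
  have e1 : (ε/2)*(A+B) ≤ A*c+B*r := by
    calc (ε/2)*(A+B) ≤ ε * ((A+B+2)/2) := by nlinarith
      _ ≤ A*c+B*r := hε1
  have e2 : (ε/2)*(B+1) ≤ (b-2)/4 := by
    calc (ε/2)*(B+1) ≤ ε * ((A+B+2)/2) := by nlinarith
      _ ≤ (b-2)/4 := hε2
  have e3 : ε ≤ (b-2)/4 := by
    calc ε = ε * 1 := by ring
      _ ≤ ε * ((A+B+2)/2) := by nlinarith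
      _ ≤ (b-2)/4 := hε2
  nlinarith [mul_le_mul_of_nonneg_right e1 (sq_nonneg x),
    mul_le_mul_of_nonneg_right e2 (sq_nonneg y),
    mul_le_mul_of_nonneg_right e3 (sq_nonneg z),
    mul_le_mul_of_nonneg_left hq1 (by positivity : (0:ℝ) ≤ ε/2),
    mul_le_mul_of_nonneg_left hq2 (by positivity : (0:ℝ) ≤ ε/2)]

/-- If 2μ < γ < 2σ then b > 2 and b < 2c for the reduced Lorenz-like system,
and the system possesses a compact ellipsoidal absorbing set {V ≤ η}. -/
theorem shapovalov_dissipativity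
    (α β σ δ μ γ : ℝ) (hα : 0 < α) (hβ : 0 < β) (hσ : 0 < σ)
    (hδ : 0 < δ) (hμ : 0 < μ) (hγ : 0 < γ)
    (hγμ : 2 * μ < γ) (hγσ : γ < 2 * σ)
    (c r b : ℝ) (hc : c = σ / μ) (hr : r = δ / σ) (hb : b = γ / μ) :
    2 < b ∧ b < 2 * c ∧
    ∃ A B η : ℝ, B ^ 2 < A ∧ 1 / c < B ∧ B < b / (2 * c) ∧ 0 < η ∧
      ∀ x y z : ℝ → ℝ,
        (∀ t, HasDerivAt x (-c * x t + c * y t) t) →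
        (∀ t, HasDerivAt y (r * x t + y t - x t * z t) t) →
        (∀ t, HasDerivAt z (-b * z t + x t * y t) t) →
        ∃ T : ℝ, ∀ t ≥ T,
          (1 / 2) * (A * (x t) ^ 2 - 2 * B * x t * y t + (y t) ^ 2 +
            (z t - (r + (A + B) * c - B)) ^ 2) ≤ η := by
  have hbμ : b * μ = γ := by rw [hb]; field_simp
  have hcμ : c * μ = σ := by rw [hc]; field_simp
  have hb2 : 2 < b := by nlinarith
  have hc0 : 0 < c := by rw [hc]; exact div_pos hσ hμ
  have hb2c : b < 2 * c := by nlinarith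
  have hc1 : 1 < c := by linarith
  have hr0 : 0 < r := by rw [hr]; exact div_pos hδ hσ
  have hb0 : 0 < b := by linarith
  -- choices
  set B : ℝ := (b+2)/(4*c) with hBdef
  set A : ℝ := B^2+1 with hAdef
  set d : ℝ := r + (A+B)*c - B with hddef
  have hBpos : 0 < B := by rw [hBdef]; positivity
  have hApos : 0 < A := by rw [hAdef]; positivity
  have hdpos : 0 < d := by
    rw [hddef]
    nlinarith [mul_pos hApos hc0, mul_pos hBpos (show (0:ℝ) < c - 1 by linarith)]
  set K₁ : ℝ := (A+B+2)/2 with hK₁def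
  have hK₁1 : 1 ≤ K₁ := by rw [hK₁def]; linarith
  have hK₁0 : 0 < K₁ := by linarith
  have ha₁ : 0 < A*c+B*r := by positivity
  have ha₂ : 0 < (b-2)/4 := by linarith
  set ε : ℝ := min (A*c+B*r) ((b-2)/4) / K₁ with hεdef
  have hεpos : 0 < ε := by
    rw [hεdef]; exact div_pos (lt_min ha₁ ha₂) hK₁0
  have hεK : ε * K₁ = min (A*c+B*r) ((b-2)/4) := by
    rw [hεdef]; exact div_mul_cancel₀ _ hK₁0.ne'
  have hε1 : ε * K₁ ≤ A*c+B*r := by rw [hεK]; exact min_le_left _ _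
  have hε2 : ε * K₁ ≤ (b-2)/4 := by rw [hεK]; exact min_le_right _ _
  set C₀ : ℝ := (b*d+(b+2)/2)^2/(b-2) with hC₀def
  have hC₀0 : 0 ≤ C₀ := by
    rw [hC₀def]; apply div_nonneg (sq_nonneg _); linarith
  set Cc : ℝ := C₀ + ε*d^2 with hCcdef
  have hCc0 : 0 ≤ Cc := by rw [hCcdef]; positivity
  set η : ℝ := Cc/ε + 1 with hηdef
  have hη0 : 0 < η := by
    have : 0 ≤ Cc/ε := div_nonneg hCc0 hεpos.le
    rw [hηdef]; linarith
  refine ⟨hb2, hb2c, A, B, η, by rw [hAdef]; linarith, ?_, ?_, hη0, ?_⟩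
  · rw [hBdef, div_lt_div_iff₀ hc0 (by positivity)]; nlinarith
  · rw [hBdef, div_lt_div_iff₀ (by positivity) (by positivity)]; nlinarith
  intro x y z hx hy hz
  -- Step 1: eventual bound x² ≤ 2cz + 2c
  have hu : ∀ t, HasDerivAt (fun s => (x s)^2/(2*c) - z s) (b * z t - (x t)^2) t := by
    intro t
    have h := (((hx t).fun_pow 2).div_const (2*c)).fun_sub (hz t)
    refine h.congr_deriv ?_
    field_simp
    ring
  have hubound : ∀ t ≥ (0:ℝ), b * z t - (x t)^2 ≤ -b * ((x t)^2/(2*c) - z t) + 0 := by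
    intro t _
    have key : b*((x t)^2/(2*c)) ≤ (x t)^2 := by
      rw [mul_div_assoc']
      rw [div_le_iff₀ (by positivity)]
      nlinarith [sq_nonneg (x t)]
    linarith [key]
  obtain ⟨T₀, hT₀⟩ := decay_bound _ _ b 0 0 hb0 hu hubound
  have hx2 : ∀ t ≥ T₀, (x t)^2 ≤ 2*c*z t + 2*c := by
    intro t ht
    have h := hT₀ t ht
    rw [zero_div] at h
    have h2 : (x t)^2/(2*c) ≤ z t + 1 := by linarith
    rw [div_le_iff₀ (by positivity)] at h2
    nlinarith [h2]
  -- Step 2: Lyapunov function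
  set V : ℝ → ℝ := fun s => (1/2) * (A*(x s)^2 - 2*B*(x s*y s) + (y s)^2 + (z s - d)^2)
    with hVdef
  set Vd : ℝ → ℝ := fun s =>
      -(A*c+B*r)*(x s)^2 - (B*c-1)*(y s)^2 + B*(x s)^2*z s - b*(z s)^2 + b*d*z s
    with hVddef
  have hV : ∀ t, HasDerivAt V (Vd t) t := by
    intro t
    exact (((((((hx t).pow 2).const_mul A).sub
        (((hx t).mul (hy t)).const_mul (2*B))).add ((hy t).pow 2)).add
        (((hz t).sub_const d).pow 2)).const_mul (1/2 : ℝ)).congr_deriv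
      (show _ = Vd t by simp only [hVddef, hddef]; push_cast; ring)
  have hVbound : ∀ t ≥ T₀, Vd t ≤ -ε * V t + Cc := by
    intro t ht
    have hA' := stepA c r b A B d (x t) (y t) (z t) hc1 hr0 hb2 hBdef hAdef hddef (hx2 t ht)
    have hB' := stepB c r b A B d ε (x t) (y t) (z t) hr0 hb2 hBpos hApos hεpos hε1 hε2
    simp only [hVddef, hVdef, hCcdef, hC₀def]
    linarith [hA', hB']
  obtain ⟨T, hT⟩ := decay_bound V Vd ε Cc T₀ hεpos hV hVbound
  refine ⟨T, fun t ht => ?_⟩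
  have h := hT t ht
  simp only [hVdef, hddef] at h
  rw [hηdef]
  linarith [h]
end

section
/- If the parameters of the Lorenz-like system satisfy b > c + 1 and r > c(3 - (c+b))/(b - (c+1)), or satisfy 3 - c < b < c + 1 and r < c(3 - (c+b))/(b - (c+1)), then the characteristic polynomial of the Jacobian at the nontrivial equilibria (±√(b(r+1)), ±√(b(r+1)), r+1) has all roots with negative real part (the Routh–Hurwitz conditions hold), so these equilibria are asymptotically stable. -/
lemma cubic_RH (A B C : ℝ) (hA : 0 < A) (hB : 0 < B) (hC : 0 < C)
    (h : C < A * B) (z : ℂ)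
    (hz : z ^ 3 + (A : ℂ) * z ^ 2 + (B : ℂ) * z + (C : ℂ) = 0) : z.re < 0 := by
  by_contra hre
  push_neg at hre
  obtain ⟨x, y⟩ := z
  simp only [Complex.ofReal_re] at hre
  have h1 := congrArg Complex.re hz
  have h2 := congrArg Complex.im hz
  simp [pow_succ, Complex.add_re, Complex.add_im, Complex.mul_re, Complex.mul_im,
    Complex.ofReal_re, Complex.ofReal_im, Complex.one_re, Complex.one_im] at h1 h2
  -- h2 : imaginary part = 0, factor y * (3x² - y² + 2Ax + B) = 0
  have h2' : y * (3 * x ^ 2 - y ^ 2 + 2 * A * x + B) = 0 := by nlinarith [h2]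
  rcases mul_eq_zero.mp h2' with hy0 | hfac
  · subst hy0; nlinarith [h1, sq_nonneg x, mul_nonneg hre hre]
  · -- y² = 3x² + 2Ax + B
    nlinarith [h1, sq_nonneg x, mul_nonneg hre hre, mul_nonneg hA.le hre]

/-- Under the Routh–Hurwitz conditions on (c, b, r), the nontrivial equilibria
(±√(b(r+1)), ±√(b(r+1)), r+1) of the Lorenz-like system are linearly
asymptotically stable: every complex eigenvalue of the Jacobian there has
negative real part. -/
theorem lorenz_like_nontrivial_equilibria_stable
    (c b r : ℝ) (hc : 0 < c) (hb : 0 < b) (hr : 0 < r)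
    (hcond :
      (c + 1 < b ∧ c * (3 - (c + b)) / (b - (c + 1)) < r) ∨
      (3 - c < b ∧ b < c + 1 ∧ r < c * (3 - (c + b)) / (b - (c + 1)))) :
    ∀ x₀ : ℝ, (x₀ = Real.sqrt (b * (r + 1)) ∨ x₀ = -Real.sqrt (b * (r + 1))) →
      ∀ s : ℂ,
        Matrix.det (s • (1 : Matrix (Fin 3) (Fin 3) ℂ) -
          (!![-c, c, 0; r - (r + 1), 1, -x₀; x₀, x₀, -b] :
            Matrix (Fin 3) (Fin 3) ℝ).map Complex.ofReal) = 0 →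
        s.re < 0 := by
  intro x₀ hx₀ s hdet
  have hbr1 : (0:ℝ) ≤ b * (r + 1) := by positivity
  have hx2 : x₀ ^ 2 = b * (r + 1) := by
    rcases hx₀ with h | h <;> rw [h] <;>
      simpa using Real.sq_sqrt hbr1
  -- Routh–Hurwitz data
  set A := b + c - 1 with hA
  set B := b * (r + c) with hB
  set C := 2 * c * b * (r + 1) with hC
  have hA0 : 0 < A := by
    rcases hcond with ⟨h1, _⟩ | ⟨h1, h2, _⟩ <;> simp [hA] <;> linarith
  have hB0 : 0 < B := by positivity
  have hC0 : 0 < C := by positivity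
  have hRH : C < A * B := by
    have key : 0 < r * (b - c - 1) + c * (b + c - 3) := by
      rcases hcond with ⟨h1, h2⟩ | ⟨h1, h2, h3⟩
      · have hd : 0 < b - (c + 1) := by linarith
        rw [div_lt_iff₀ hd] at h2
        nlinarith
      · have hd : b - (c + 1) < 0 := by linarith
        rw [lt_div_iff_of_neg hd] at h3
        nlinarith
    simp only [hA, hB, hC]
    nlinarith
  -- compute the determinant as the cubic
  have hpoly : s ^ 3 + (A : ℂ) * s ^ 2 + (B : ℂ) * s + (C : ℂ) = 0 := by
    have hx2' : (x₀ : ℂ) ^ 2 = (b : ℂ) * ((r : ℂ) + 1) := by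
      have := congrArg (Complex.ofReal) hx2
      push_cast at this
      exact this
    rw [Matrix.det_fin_three] at hdet
    simp [Matrix.map_apply, Matrix.smul_apply, Matrix.one_apply] at hdet
    rw [hA, hB, hC]
    push_cast
    linear_combination hdet - ((s:ℂ) + 2*(c:ℂ)) * hx2'
  exact cubic_RH A B C hA0 hB0 hC0 hRH s hpoly
end
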